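/- Fix k ∈ ℕ and M : Fin k → ℕ. Then Σ_m Π_{i<k} (−1)^{m_i} · (m_i − 1)! · S(M_i, m_i) = (−1)^k if M_i = 1 for every i < k, and = 0 otherwise, where the (integer-valued) sum ranges over all m : Fin k → ℕ with 1 ≤ m_i ≤ M_i for every i. -/
import Mathlib


/-- Stirling numbers of the second kind, defined by the recurrence
`S(n,k) = k·S(n-1,k) + S(n-1,k-1)` for `n,k > 0`, with `S(0,0) = 1`,
`S(0,k) = 0` for `k > 0` and `S(n,0) = 0` for `n > 0`. -/
def stirlingSecond : ℕ → ℕ → ℕ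
  | 0, 0 => 1
  | 0, _ + 1 => 0
  | _ + 1, 0 => 0
  | n + 1, k + 1 => (k + 1) * stirlingSecond n (k + 1) + stirlingSecond n k

lemma stirling_eq_zero_of_lt : ∀ n k : ℕ, n < k → stirlingSecond n k = 0 := by
  intro n
  induction n with
  | zero => intro k hk; cases k with
    | zero => omega
    | succ k => rfl
  | succ n ih =>
    intro k hk
    cases k with
    | zero => omega
    | succ k =>
      show (k + 1) * stirlingSecond n (k + 1) + stirlingSecond n k = 0
      rw [ih (k+1) (by omega), ih k (by omega)]
      ring

lemma single_sum (M : ℕ) :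
    ∑ m ∈ Finset.Icc 1 M, (-1 : ℤ) ^ m * ((m - 1).factorial : ℤ) *
      (stirlingSecond M m : ℤ) = if M = 1 then -1 else 0 := by
  cases M with
  | zero => simp
  | succ n =>
    rw [← Finset.Ico_add_one_right_eq_Icc, Finset.sum_Ico_eq_sum_range]
    simp only [Nat.add_sub_cancel, show n + 1 + 1 - 1 = n + 1 from rfl]
    have key : ∀ i ∈ Finset.range (n+1),
        (-1 : ℤ) ^ (1 + i) * (((1 + i - 1).factorial : ℕ) : ℤ) *
          (stirlingSecond (n+1) (1+i) : ℤ)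
        = (-(-1:ℤ)^i * ((i+1).factorial : ℤ) * (stirlingSecond n (i+1) : ℤ))
          + (-(-1:ℤ)^i * (i.factorial : ℤ) * (stirlingSecond n i : ℤ)) := by
      intro i _
      have h1 : 1 + i = i + 1 := by omega
      rw [h1]
      show (-1 : ℤ) ^ (i+1) * ((i + 1 - 1).factorial : ℤ) *
        (((i + 1) * stirlingSecond n (i + 1) + stirlingSecond n i : ℕ) : ℤ) = _
      simp only [Nat.add_sub_cancel, Nat.cast_add, Nat.cast_mul, Nat.cast_ofNat]
      rw [Nat.factorial_succ]
      push_cast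
      ring
    rw [Finset.sum_congr rfl key, Finset.sum_add_distrib]
    have hA : ∑ i ∈ Finset.range (n+1),
        (-(-1:ℤ)^i * ((i+1).factorial : ℤ) * (stirlingSecond n (i+1) : ℤ))
        = ∑ i ∈ Finset.range n,
        (-(-1:ℤ)^i * ((i+1).factorial : ℤ) * (stirlingSecond n (i+1) : ℤ)) := by
      rw [Finset.sum_range_succ, stirling_eq_zero_of_lt n (n+1) (by omega)]
      simp
    have hB : ∑ i ∈ Finset.range (n+1),
        (-(-1:ℤ)^i * (i.factorial : ℤ) * (stirlingSecond n i : ℤ))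
        = (∑ i ∈ Finset.range n,
            (-(-1:ℤ)^(i+1) * ((i+1).factorial : ℤ) * (stirlingSecond n (i+1) : ℤ)))
          + (-(stirlingSecond n 0 : ℤ)) := by
      rw [Finset.sum_range_succ']
      simp
    rw [hA, hB]
    have : ∀ i ∈ Finset.range n,
        (-(-1:ℤ)^(i+1) * ((i+1).factorial : ℤ) * (stirlingSecond n (i+1) : ℤ))
        = -(-(-1:ℤ)^i * ((i+1).factorial : ℤ) * (stirlingSecond n (i+1) : ℤ)) := by
      intro i _; ring
    rw [Finset.sum_congr rfl this, Finset.sum_neg_distrib]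
    cases n with
    | zero => simp [stirlingSecond]
    | succ n =>
      have : stirlingSecond (n+1) 0 = 0 := rfl
      rw [this]
      simp

/-- Lemma B.4 ('stirling_sums_alternated_multi_2').
`∑_m ∏_i (-1)^{m_i} (m_i - 1)! S(M_i, m_i) = (-1)^k` if `M ≡ 1` and `0` otherwise,
the sum ranging over all `m : Fin k → ℕ` with `1 ≤ m_i ≤ M_i`. -/
theorem stmt_11 (k : ℕ) (M : Fin k → ℕ) :
    ∑ m ∈ Fintype.piFinset (fun i : Fin k => Finset.Icc 1 (M i)),
      ∏ i : Fin k, (-1 : ℤ) ^ m i * ((m i - 1).factorial : ℤ) *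
        (stirlingSecond (M i) (m i) : ℤ) =
      if ∀ i, M i = 1 then (-1 : ℤ) ^ k else 0 := by
  rw [← Finset.prod_univ_sum (fun i => Finset.Icc 1 (M i)) (fun i m => (-1:ℤ)^m * ((m-1).factorial:ℤ) * (stirlingSecond (M i) m : ℤ))]
  have := fun i : Fin k => single_sum (M i)
  rw [Finset.prod_congr rfl (fun i _ => this i)]
  by_cases h : ∀ i, M i = 1
  · rw [if_pos h]
    rw [Finset.prod_congr rfl (fun i _ => by rw [if_pos (h i)])]
    simp
  · rw [if_neg h]
    push_neg at h
    obtain ⟨i, hi⟩ := h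
    exact Finset.prod_eq_zero (Finset.mem_univ i) (by rw [if_neg hi])
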